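/- arXiv:2203.17028 — 2 statements merged into one kernel-verified Lean document; each statement's English description precedes it below -/
import Mathlib

section
/- Define v² = Σ_{t=1}^T (2γ_t²/ξ_t)·max_i η_t(i) and R(ε,δ) = (√(ε + [C^{-1}(1/δ)]²) − C^{-1}(1/δ))², where C(x) = √π x e^{x²}. If 2v² ≤ R(ε,δ), then ε/2 − v² ≥ v·C^{-1}(1/δ), and consequently the Gaussian-mechanism privacy loss with variance proxy v² satisfies P(|L| > ε) ≤ δ. -/
/-! With `c = C⁻¹(1/δ)`, the hypothesis `2v² ≤ R(ε, δ)` says that `√(2v²) + c ≤ √(ε + c²)`,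
which squares to `c √(2v²) ≤ ε/2 - v²`. Hence the loss `2X + 2v²`, `X ~ N(0, v²)`, can only
exceed `ε` in absolute value when `|X| > a := c √(2v²)`. The Mills-ratio bound
`P(X > a) ≤ (v²/a) φ(a)`, which comes from `x φ(x) = -v² φ'(x)` and `x/a ≥ 1` on `(a, ∞)`,
gives `P(|X| > a) ≤ 1 / C(c) = δ`. -/

open ProbabilityTheory Real MeasureTheory Filter Set Topology
open scoped NNReal

lemma mul_sqrt_two_mul_le_half_sub {c ε w : ℝ} (hc : 0 ≤ c) (hε : 0 ≤ ε) (hw : 0 ≤ w)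
    (h : 2 * w ≤ (√(ε + c ^ 2) - c) ^ 2) : c * √(2 * w) ≤ ε / 2 - w := by
  have hc_le : c ≤ √(ε + c ^ 2) := le_sqrt_of_sq_le (by linarith)
  have hsqrt_le : √(2 * w) + c ≤ √(ε + c ^ 2) := by
    have := sqrt_le_sqrt h
    rw [sqrt_sq (by linarith)] at this
    linarith
  have hsq := pow_le_pow_left₀ (by positivity) hsqrt_le 2
  rw [sq_sqrt (by positivity), add_sq, sq_sqrt (by positivity)] at hsq
  linarith

namespace ProbabilityTheory

lemma tendsto_gaussianPDFReal_atTop (μ : ℝ) (v : ℝ≥0) :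
    Tendsto (gaussianPDFReal μ v) atTop (𝓝 0) := by
  rcases eq_or_ne v 0 with rfl | hv
  · rw [gaussianPDFReal_zero_var]
    exact tendsto_const_nhds
  have hexponent : Tendsto (fun x : ℝ => -(x - μ) ^ 2 / (2 * v)) atTop atBot :=
    (tendsto_neg_atBot_iff.2 ((tendsto_pow_atTop two_ne_zero).comp
      (tendsto_atTop_add_const_right _ (-μ) tendsto_id))).atBot_div_const
      (by positivity)
  have h := (tendsto_exp_atBot.comp hexponent).const_mul (√(2 * π * v))⁻¹
  rw [mul_zero] at h
  exact h

lemma hasDerivAt_neg_mul_gaussianPDFReal {v : ℝ≥0} (hv : v ≠ 0) (x : ℝ) :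
    HasDerivAt (fun y => -(v : ℝ) * gaussianPDFReal 0 v y) (x * gaussianPDFReal 0 v x) x := by
  have h := ((((hasDerivAt_id x).sub_const 0).pow 2).neg.div_const (2 * (v : ℝ))).exp.const_mul
    (√(2 * π * v))⁻¹ |>.const_mul (-(v : ℝ))
  refine h.congr_deriv ?_
  have hv' : (v : ℝ) ≠ 0 := by exact_mod_cast hv
  simp only [gaussianPDFReal, Pi.pow_apply, Pi.neg_apply, id, sub_zero]
  field_simp
  ring

lemma integrableOn_Ioi_mul_gaussianPDFReal {v : ℝ≥0} (hv : v ≠ 0) {a : ℝ} (ha : 0 ≤ a) :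
    IntegrableOn (fun x => x * gaussianPDFReal 0 v x) (Ioi a) :=
  integrableOn_Ioi_deriv_of_nonneg' (fun x _ => hasDerivAt_neg_mul_gaussianPDFReal hv x)
    (fun x hx => mul_nonneg (ha.trans hx.out.le) (gaussianPDFReal_nonneg 0 v x))
    (by simpa using (tendsto_gaussianPDFReal_atTop 0 v).const_mul (-(v : ℝ)))

lemma integral_Ioi_mul_gaussianPDFReal {v : ℝ≥0} (hv : v ≠ 0) {a : ℝ} (ha : 0 ≤ a) :
    ∫ x in Ioi a, x * gaussianPDFReal 0 v x = v * gaussianPDFReal 0 v a := by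
  rw [integral_Ioi_of_hasDerivAt_of_nonneg' (fun x _ => hasDerivAt_neg_mul_gaussianPDFReal hv x)
    (fun x hx => mul_nonneg (ha.trans hx.out.le) (gaussianPDFReal_nonneg 0 v x))
    (by simpa using (tendsto_gaussianPDFReal_atTop 0 v).const_mul (-(v : ℝ)))]
  ring

lemma gaussianReal_Ioi_le {v : ℝ≥0} (hv : v ≠ 0) {a : ℝ} (ha : 0 < a) :
    gaussianReal 0 v (Ioi a) ≤ ENNReal.ofReal (v / a * gaussianPDFReal 0 v a) := by
  rw [gaussianReal_apply_eq_integral _ hv]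
  refine ENNReal.ofReal_le_ofReal ?_
  calc ∫ x in Ioi a, gaussianPDFReal 0 v x
      ≤ ∫ x in Ioi a, a⁻¹ * (x * gaussianPDFReal 0 v x) := by
        refine setIntegral_mono_on (integrable_gaussianPDFReal 0 v).integrableOn
          ((integrableOn_Ioi_mul_gaussianPDFReal hv ha.le).const_mul _) measurableSet_Ioi
          fun x hx => ?_
        rw [← mul_assoc, le_mul_iff_one_le_left (gaussianPDFReal_pos 0 v x hv),
          inv_mul_eq_div, one_le_div ha]
        exact hx.out.le
    _ = v / a * gaussianPDFReal 0 v a := by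
        rw [integral_const_mul, integral_Ioi_mul_gaussianPDFReal hv ha.le]
        ring

lemma gaussianReal_Iio_neg (v : ℝ≥0) (a : ℝ) :
    gaussianReal 0 v (Iio (-a)) = gaussianReal 0 v (Ioi a) := by
  conv_rhs => rw [← neg_zero, ← gaussianReal_map_neg,
    Measure.map_apply measurable_neg measurableSet_Ioi]
  congr 1
  ext x
  simp

lemma gaussianReal_lt_abs_le {v : ℝ≥0} (hv : v ≠ 0) {a : ℝ} (ha : 0 < a) :
    gaussianReal 0 v {x | a < |x|} ≤ ENNReal.ofReal (2 * (v / a * gaussianPDFReal 0 v a)) := by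
  have hsplit : {x : ℝ | a < |x|} = Iio (-a) ∪ Ioi a := by
    ext x
    simp [lt_abs, lt_neg, or_comm]
  have hpos : 0 ≤ v / a * gaussianPDFReal 0 v a := by
    have := gaussianPDFReal_nonneg 0 v a
    positivity
  rw [hsplit, two_mul, ENNReal.ofReal_add hpos hpos]
  refine (measure_union_le _ _).trans ?_
  rw [gaussianReal_Iio_neg]
  exact add_le_add (gaussianReal_Ioi_le hv ha) (gaussianReal_Ioi_le hv ha)

lemma gaussianReal_mul_sqrt_two_mul_lt_abs_le (v : ℝ≥0) {t : ℝ} (ht : 0 < t) :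
    gaussianReal 0 v {x | t * √(2 * v) < |x|} ≤ ENNReal.ofReal (1 / (√π * t * exp (t ^ 2))) := by
  rcases eq_or_ne v 0 with rfl | hv
  · rw [gaussianReal_zero_var,
      Measure.dirac_apply' _ (measurableSet_lt measurable_const continuous_abs.measurable)]
    simp
  have hv' : (0 : ℝ) < v := by positivity
  have hs : 0 < √(2 * v) := by positivity
  refine (gaussianReal_lt_abs_le hv (by positivity)).trans (ENNReal.ofReal_le_ofReal (le_of_eq ?_))
  have hsq : √(2 * v) ^ 2 = 2 * v := sq_sqrt (by positivity)
  have hexp : -(t * √(2 * v) - 0) ^ 2 / (2 * v) = -t ^ 2 := by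
    rw [sub_zero, mul_pow, hsq]
    field_simp
  have hsqrt : √(2 * π * v) = √(2 * v) * √π := by
    rw [← sqrt_mul (by positivity)]
    ring_nf
  rw [gaussianPDFReal, hexp, hsqrt, exp_neg]
  generalize √(2 * v) = s at hs hsq ⊢
  field_simp
  rw [hsq]

end ProbabilityTheory

theorem stmt11_general (T I : ℕ) (hI : 0 < I)
    (γ ξ : Fin T → ℝ) (hξ : ∀ t, 0 < ξ t)
    (η : Fin T → Fin I → ℝ) (hη : ∀ t i, 0 < η t i)
    (ε δ : ℝ) (hε : 0 < ε) (hδ0 : 0 < δ)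
    (Cinv : ℝ → ℝ)
    (hCinv : ∀ y : ℝ, 0 < y →
      0 < Cinv y ∧ Real.sqrt π * Cinv y * Real.exp (Cinv y ^ 2) = y)
    (v2 : ℝ)
    (hv2 : v2 = ∑ t, (2 * γ t ^ 2 / ξ t) *
        Finset.univ.sup' ⟨⟨0, hI⟩, Finset.mem_univ _⟩ (η t))
    (hR : 2 * v2 ≤ (Real.sqrt (ε + Cinv (1 / δ) ^ 2) - Cinv (1 / δ)) ^ 2) :
    Cinv (1 / δ) * Real.sqrt v2 ≤ ε / 2 - v2 ∧
    gaussianReal 0 v2.toNNReal {x | ε < |2 * x + 2 * v2|} ≤ ENNReal.ofReal δ := by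
  obtain ⟨hc, hC⟩ := hCinv (1 / δ) (one_div_pos.mpr hδ0)
  set c := Cinv (1 / δ)
  have hv2_nonneg : 0 ≤ v2 := hv2 ▸ Finset.sum_nonneg fun t _ =>
    mul_nonneg (div_nonneg (by positivity) (hξ t).le)
      ((hη t _).le.trans (Finset.le_sup' _ (Finset.mem_univ ⟨0, hI⟩)))
  have hmargin : c * √(2 * v2) ≤ ε / 2 - v2 :=
    mul_sqrt_two_mul_le_half_sub hc.le hε.le hv2_nonneg hR
  refine ⟨(mul_le_mul_of_nonneg_left (sqrt_le_sqrt (by linarith)) hc.le).trans hmargin, ?_⟩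
  have hsub : {x : ℝ | ε < |2 * x + 2 * v2|} ⊆ {x | c * √(2 * (v2.toNNReal : ℝ)) < |x|} := by
    rw [Real.coe_toNNReal _ hv2_nonneg]
    intro x (hx : ε < |2 * x + 2 * v2|)
    have htriangle : |2 * x + 2 * v2| ≤ 2 * |x| + 2 * v2 := by
      simpa [abs_mul, abs_of_nonneg hv2_nonneg] using abs_add_le (2 * x) (2 * v2)
    show c * √(2 * v2) < |x|
    linarith
  calc gaussianReal 0 v2.toNNReal {x | ε < |2 * x + 2 * v2|}
      ≤ ENNReal.ofReal (1 / (√π * c * exp (c ^ 2))) :=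
        (measure_mono hsub).trans (gaussianReal_mul_sqrt_two_mul_lt_abs_le _ hc)
    _ = ENNReal.ofReal δ := by rw [hC, one_div_one_div]

theorem stmt11 (T I : ℕ) (hI : 0 < I)
    (γ ξ : Fin T → ℝ) (hγ : ∀ t, 0 < γ t) (hξ : ∀ t, 0 < ξ t)
    (η : Fin T → Fin I → ℝ) (hη : ∀ t i, 0 < η t i)
    (ε δ : ℝ) (hε : 0 < ε) (hδ0 : 0 < δ) (hδ1 : δ ≤ 1)
    (Cinv : ℝ → ℝ)
    (hCinv : ∀ y : ℝ, 0 < y →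
      0 < Cinv y ∧ Real.sqrt π * Cinv y * Real.exp (Cinv y ^ 2) = y)
    (v2 : ℝ)
    (hv2 : v2 = ∑ t, (2 * γ t ^ 2 / ξ t) *
        Finset.univ.sup' ⟨⟨0, hI⟩, Finset.mem_univ _⟩ (η t))
    (hR : 2 * v2 ≤ (Real.sqrt (ε + Cinv (1 / δ) ^ 2) - Cinv (1 / δ)) ^ 2) :
    Cinv (1 / δ) * Real.sqrt v2 ≤ ε / 2 - v2 ∧
    gaussianReal 0 v2.toNNReal {x | ε < |2 * x + 2 * v2|} ≤ ENNReal.ofReal δ :=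
  stmt11_general T I hI γ ξ hξ η hη ε δ hε hδ0 Cinv hCinv v2 hv2 hR
end

section
/- (Optimality of zero artificial noise) In the convex program minimizing Σ_t (1 − μ/L)^{−t}(Σ_{k,i} a_{k,t}^i + N₀ Σ_i b_t^i) subject to c_t^i ≤ Σ_k a_{k,t}^i + N₀ b_t^i, D²ζ²_{k,t}(i) + e·a_{k,t}^i ≤ P₀|h_{k,t}(i)|² b_t^i, d_t ≤ c_t^i, Σ_t 4γ_t²/d_t ≤ R, and nonnegativity, an optimal solution has a_{k,t}^i = 0 for all k, i, t. -/
/-- Feasibility for the change-of-variables form of problem P₁: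
`a t k i` is artificial-noise power, `b t i` the inverse power scalar,
`c t i = ξ_t / η_t(i)`, `dd t = ξ_t / max_i η_t(i)`. -/
def Feasible16 {T K I : ℕ} (N₀ D P₀ e' R : ℝ)
    (ζ hsq : Fin T → Fin K → Fin I → ℝ) (γ : Fin T → ℝ)
    (a : Fin T → Fin K → Fin I → ℝ) (b c : Fin T → Fin I → ℝ)
    (dd : Fin T → ℝ) : Prop :=
  (∀ t k i, 0 ≤ a t k i) ∧ (∀ t i, 0 < b t i) ∧ (∀ t i, 0 < c t i) ∧
  (∀ t, 0 < dd t) ∧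
  (∀ t i, c t i ≤ ∑ k, a t k i + N₀ * b t i) ∧
  (∀ t k i, D ^ 2 * ζ t k i ^ 2 + e' * a t k i ≤ P₀ * hsq t k i * b t i) ∧
  (∀ t i, dd t ≤ c t i) ∧
  (∑ t, 4 * γ t ^ 2 / dd t ≤ R)

/-- Objective of the change-of-variables form of problem P₁. -/
noncomputable def Obj16 {T K I : ℕ} (μ L N₀ : ℝ)
    (a : Fin T → Fin K → Fin I → ℝ) (b : Fin T → Fin I → ℝ) : ℝ :=
  ∑ t, ((1 - μ / L)⁻¹) ^ (t.val + 1) * (∑ k, ∑ i, a t k i + N₀ * ∑ i, b t i)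

/-- Folding the artificial noise power into the inverse power scalar keeps the received power
`∑ k, a t k i + N₀ * b t i` and the objective unchanged, while the power constraint only gets
looser; hence zero artificial noise loses nothing. -/
noncomputable def absorbNoise {T K I : ℕ} (N₀ : ℝ)
    (a : Fin T → Fin K → Fin I → ℝ) (b : Fin T → Fin I → ℝ) : Fin T → Fin I → ℝ :=
  fun t i => b t i + (∑ k, a t k i) / N₀

section AbsorbNoise

variable {T K I : ℕ} {N₀ : ℝ} {a : Fin T → Fin K → Fin I → ℝ} {b : Fin T → Fin I → ℝ}

theorem mul_absorbNoise (hN₀ : N₀ ≠ 0) (t : Fin T) (i : Fin I) :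
    N₀ * absorbNoise N₀ a b t i = ∑ k, a t k i + N₀ * b t i := by
  rw [absorbNoise]
  field_simp
  ring

theorem le_absorbNoise (hN₀ : 0 ≤ N₀) (ha : ∀ t k i, 0 ≤ a t k i) (t : Fin T) (i : Fin I) :
    b t i ≤ absorbNoise N₀ a b t i :=
  le_add_of_nonneg_right <| div_nonneg (Finset.sum_nonneg fun k _ => ha t k i) hN₀

theorem Obj16_absorbNoise (μ L : ℝ) (hN₀ : N₀ ≠ 0) :
    Obj16 μ L N₀ (fun (_ : Fin T) (_ : Fin K) (_ : Fin I) => (0 : ℝ)) (absorbNoise N₀ a b) =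
      Obj16 μ L N₀ a b := by
  refine Finset.sum_congr rfl fun t _ => congrArg _ ?_
  simp only [Finset.sum_const_zero, zero_add, Finset.mul_sum, mul_absorbNoise hN₀,
    Finset.sum_add_distrib]
  rw [Finset.sum_comm]

theorem Feasible16_absorbNoise {D P₀ e' R : ℝ} {ζ hsq : Fin T → Fin K → Fin I → ℝ}
    {γ : Fin T → ℝ} {c : Fin T → Fin I → ℝ} {dd : Fin T → ℝ}
    (hN₀ : 0 < N₀) (hP₀ : 0 ≤ P₀) (he' : 0 ≤ e') (hhsq : ∀ t k i, 0 ≤ hsq t k i)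
    (hfeas : Feasible16 N₀ D P₀ e' R ζ hsq γ a b c dd) :
    Feasible16 N₀ D P₀ e' R ζ hsq γ (fun _ _ _ => 0) (absorbNoise N₀ a b) c dd := by
  obtain ⟨ha, hb, hc, hdd, hrecv, hpow, hcdd, hR⟩ := hfeas
  refine ⟨fun _ _ _ => le_rfl, fun t i => (hb t i).trans_le (le_absorbNoise hN₀.le ha t i),
    hc, hdd, fun t i => ?_, fun t k i => ?_, hcdd, hR⟩
  · simpa only [Finset.sum_const_zero, zero_add, mul_absorbNoise hN₀.ne'] using hrecv t i
  · calc D ^ 2 * ζ t k i ^ 2 + e' * 0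
        ≤ D ^ 2 * ζ t k i ^ 2 + e' * a t k i := by gcongr; exact ha t k i
      _ ≤ P₀ * hsq t k i * b t i := hpow t k i
      _ ≤ P₀ * hsq t k i * absorbNoise N₀ a b t i := by
        gcongr
        · exact mul_nonneg hP₀ (hhsq t k i)
        · exact le_absorbNoise hN₀.le ha t i

end AbsorbNoise

theorem stmt16_general {T K I : ℕ} (μ L N₀ D P₀ e' R : ℝ)
    (hN₀ : 0 < N₀) (hP₀ : 0 < P₀)
    (he' : 0 < e')
    (ζ hsq : Fin T → Fin K → Fin I → ℝ)
    (hhsq : ∀ t k i, 0 < hsq t k i)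
    (γ : Fin T → ℝ)
    (a : Fin T → Fin K → Fin I → ℝ) (b c : Fin T → Fin I → ℝ) (dd : Fin T → ℝ)
    (hfeas : Feasible16 N₀ D P₀ e' R ζ hsq γ a b c dd) :
    ∃ (b' c' : Fin T → Fin I → ℝ) (dd' : Fin T → ℝ),
      Feasible16 N₀ D P₀ e' R ζ hsq γ (fun _ _ _ => (0:ℝ)) b' c' dd' ∧
      Obj16 μ L N₀ (fun (_ : Fin T) (_ : Fin K) (_ : Fin I) => (0:ℝ)) b' ≤ Obj16 μ L N₀ a b :=
  ⟨absorbNoise N₀ a b, c, dd,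
    Feasible16_absorbNoise hN₀ hP₀.le he'.le (fun t k i => (hhsq t k i).le) hfeas,
    (Obj16_absorbNoise μ L hN₀.ne').le⟩

theorem stmt16 {T K I : ℕ} (μ L N₀ D P₀ e' R : ℝ)
    (hμ : 0 < μ) (hμL : μ ≤ L) (hN₀ : 0 < N₀) (hD : 0 < D) (hP₀ : 0 < P₀)
    (he' : 0 < e') (hR : 0 < R)
    (ζ hsq : Fin T → Fin K → Fin I → ℝ)
    (hζ : ∀ t k i, 0 < ζ t k i) (hhsq : ∀ t k i, 0 < hsq t k i)
    (γ : Fin T → ℝ) (hγ : ∀ t, 0 < γ t)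
    (a : Fin T → Fin K → Fin I → ℝ) (b c : Fin T → Fin I → ℝ) (dd : Fin T → ℝ)
    (hfeas : Feasible16 N₀ D P₀ e' R ζ hsq γ a b c dd) :
    ∃ (b' c' : Fin T → Fin I → ℝ) (dd' : Fin T → ℝ),
      Feasible16 N₀ D P₀ e' R ζ hsq γ (fun _ _ _ => (0:ℝ)) b' c' dd' ∧
      Obj16 μ L N₀ (fun (_ : Fin T) (_ : Fin K) (_ : Fin I) => (0:ℝ)) b' ≤ Obj16 μ L N₀ a b :=
  stmt16_general μ L N₀ D P₀ e' R hN₀ hP₀ he' ζ hsq hhsq γ a b c dd hfeas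
end
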